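/- In the lattice L = U³ ⊕ E_8(-1)² ⊕ A_2(-1), there is no primitive isotropic element of divisibility 3; equivalently, every primitive element l with l² = 0 has divisibility 1. -/
import Mathlib

/-- Index type for the lattice `L = U³ ⊕ E₈(-1)² ⊕ A₂(-1)`. -/
abbrev OGIndex := (Fin 3 × Fin 2) ⊕ ((Fin 2 × Fin 8) ⊕ Fin 2)

def Umat : Matrix (Fin 2) (Fin 2) ℤ := !![0, 1; 1, 0]

def E8negMat : Matrix (Fin 8) (Fin 8) ℤ :=
  !![-2,  1,  0,  0,  0,  0,  0,  0;
      1, -2,  1,  0,  0,  0,  0,  0;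
      0,  1, -2,  1,  0,  0,  0,  1;
      0,  0,  1, -2,  1,  0,  0,  0;
      0,  0,  0,  1, -2,  1,  0,  0;
      0,  0,  0,  0,  1, -2,  1,  0;
      0,  0,  0,  0,  0,  1, -2,  0;
      0,  0,  1,  0,  0,  0,  0, -2]

def A2negMat : Matrix (Fin 2) (Fin 2) ℤ := !![-2, 1; 1, -2]

/-- Gram form of `L = U³ ⊕ E₈(-1)² ⊕ A₂(-1)` on the index set. -/
def gramOG : OGIndex → OGIndex → ℤ
  | Sum.inl (k, i), Sum.inl (k', i') => if k = k' then Umat i i' else 0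
  | Sum.inr (Sum.inl (k, i)), Sum.inr (Sum.inl (k', i')) => if k = k' then E8negMat i i' else 0
  | Sum.inr (Sum.inr i), Sum.inr (Sum.inr i') => A2negMat i i'
  | _, _ => 0

/-- The bilinear form of `L` in coordinates. -/
def BOG (x y : OGIndex → ℤ) : ℤ := ∑ i, ∑ j, x i * gramOG i j * y j

/-! ### Auxiliary material -/

/-- Inverse of `E8negMat` (it is unimodular). -/
def E8invMat : Matrix (Fin 8) (Fin 8) ℤ :=
  !![-4, -7, -10, -8, -6, -4, -2, -5;
     -7, -14, -20, -16, -12, -8, -4, -10;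
     -10, -20, -30, -24, -18, -12, -6, -15;
     -8, -16, -24, -20, -15, -10, -5, -12;
     -6, -12, -18, -15, -12, -8, -4, -9;
     -4, -8, -12, -10, -8, -6, -3, -6;
     -2, -4, -6, -5, -4, -3, -2, -3;
     -5, -10, -15, -12, -9, -6, -3, -8]

lemma e8_mul_inv : E8negMat * E8invMat = 1 := by decide

lemma e8_key (x : Fin 8 → ℤ) (i : Fin 8) :
    x i = ∑ j, (∑ i', x i' * E8negMat i' j) * E8invMat j i := by
  have h1 : ∀ j : Fin 8, (∑ i', x i' * E8negMat i' j) * E8invMat j i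
      = ∑ i', x i' * (E8negMat i' j * E8invMat j i) := by
    intro j; rw [Finset.sum_mul]; exact Finset.sum_congr rfl fun i' _ => by ring
  simp_rw [h1]
  rw [Finset.sum_comm]
  have h2 : ∀ i' : Fin 8, (∑ j, x i' * (E8negMat i' j * E8invMat j i))
      = x i' * (E8negMat * E8invMat) i' i := by
    intro i'; rw [Matrix.mul_apply, Finset.mul_sum]
  simp_rw [h2, e8_mul_inv, Matrix.one_apply]
  simp

lemma e8_div (g : ℤ) (x : Fin 8 → ℤ) (h : ∀ j, g ∣ ∑ i, x i * E8negMat i j) :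
    ∀ i, g ∣ x i := by
  intro i
  rw [e8_key x i]
  exact Finset.dvd_sum fun j _ => (h j).mul_right _

/-- `wOG l j = B(l, e_j)`. -/
def wOG (l : OGIndex → ℤ) (j : OGIndex) : ℤ := ∑ i, l i * gramOG i j

lemma BOG_eq (l m : OGIndex → ℤ) : BOG l m = ∑ j, wOG l j * m j := by
  unfold BOG wOG
  rw [Finset.sum_comm]
  exact Finset.sum_congr rfl fun j _ => (Finset.sum_mul _ _ _).symm

lemma wOG_U (l : OGIndex → ℤ) (k : Fin 3) :
    wOG l (Sum.inl (k, 0)) = l (Sum.inl (k, 1)) ∧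
    wOG l (Sum.inl (k, 1)) = l (Sum.inl (k, 0)) := by
  constructor <;>
  · fin_cases k <;>
    simp [wOG, gramOG, Fintype.sum_sum_type, Fintype.sum_prod_type, Fin.sum_univ_succ, Umat,
      Matrix.cons_val_zero, Matrix.cons_val_one, Matrix.head_cons]

lemma wOG_E8 (l : OGIndex → ℤ) (k : Fin 2) (j : Fin 8) :
    wOG l (Sum.inr (Sum.inl (k, j))) = ∑ i, l (Sum.inr (Sum.inl (k, i))) * E8negMat i j := by
  fin_cases k <;>
  simp [wOG, gramOG, Fintype.sum_sum_type, Fintype.sum_prod_type, Fin.sum_univ_succ]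

lemma wOG_A2_0 (l : OGIndex → ℤ) :
    wOG l (Sum.inr (Sum.inr 0)) =
      -2 * l (Sum.inr (Sum.inr 0)) + l (Sum.inr (Sum.inr 1)) := by
  simp [wOG, gramOG, Fintype.sum_sum_type, Fintype.sum_prod_type, Fin.sum_univ_succ, A2negMat,
    Matrix.cons_val_zero, Matrix.cons_val_one, Matrix.head_cons]
  ring

lemma wOG_A2_1 (l : OGIndex → ℤ) :
    wOG l (Sum.inr (Sum.inr 1)) =
      l (Sum.inr (Sum.inr 0)) - 2 * l (Sum.inr (Sum.inr 1)) := by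
  simp [wOG, gramOG, Fintype.sum_sum_type, Fintype.sum_prod_type, Fin.sum_univ_succ, A2negMat,
    Matrix.cons_val_zero, Matrix.cons_val_one, Matrix.head_cons]
  ring

lemma dvd_l_of_dvd_w (l : OGIndex → ℤ) (g : ℤ) (hg : ∀ j, g ∣ wOG l j) :
    (∀ k : Fin 3, ∀ i : Fin 2, g ∣ l (Sum.inl (k, i))) ∧
    (∀ k : Fin 2, ∀ i : Fin 8, g ∣ l (Sum.inr (Sum.inl (k, i)))) ∧
    g ∣ 3 * l (Sum.inr (Sum.inr 0)) ∧ g ∣ 3 * l (Sum.inr (Sum.inr 1)) := by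
  refine ⟨?_, ?_, ?_, ?_⟩
  · intro k i
    fin_cases i
    · exact (wOG_U l k).2 ▸ hg (Sum.inl (k, 1))
    · exact (wOG_U l k).1 ▸ hg (Sum.inl (k, 0))
  · intro k i
    refine e8_div g (fun i => l (Sum.inr (Sum.inl (k, i)))) (fun j => ?_) i
    rw [← wOG_E8]
    exact hg _
  · have h : 3 * l (Sum.inr (Sum.inr 0)) =
        -2 * wOG l (Sum.inr (Sum.inr 0)) - wOG l (Sum.inr (Sum.inr 1)) := by
      rw [wOG_A2_0, wOG_A2_1]; ring
    rw [h]
    exact dvd_sub ((hg _).mul_left _) (hg _)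
  · have h : 3 * l (Sum.inr (Sum.inr 1)) =
        -wOG l (Sum.inr (Sum.inr 0)) - 2 * wOG l (Sum.inr (Sum.inr 1)) := by
      rw [wOG_A2_0, wOG_A2_1]; ring
    rw [h]
    exact dvd_sub ((hg _).neg_right) ((hg _).mul_left _)

lemma no_div_three (l : OGIndex → ℤ)
    (hprim : ∀ n : ℤ, (∀ i, n ∣ l i) → IsUnit n)
    (hiso : BOG l l = 0) :
    ¬ ∀ j, (3 : ℤ) ∣ wOG l j := by
  intro h3
  obtain ⟨hU, hE, -, -⟩ := dvd_l_of_dvd_w l 3 h3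
  set s0 := l (Sum.inr (Sum.inr 0)) with hs0def
  set s1 := l (Sum.inr (Sum.inr 1)) with hs1def
  -- 3 ∣ s0 + s1
  have hs : (3 : ℤ) ∣ s0 + s1 := by
    have h0 := h3 (Sum.inr (Sum.inr 0))
    rw [wOG_A2_0] at h0
    have : s0 + s1 = (-2 * s0 + s1) + 3 * s0 := by ring
    rw [this]
    exact dvd_add h0 (Dvd.intro _ rfl)
  -- 3 does not divide s0
  have hns0 : ¬ (3 : ℤ) ∣ s0 := by
    intro h
    have h1 : (3 : ℤ) ∣ s1 := by
      have : s1 = (s0 + s1) - s0 := by ring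
      rw [this]; exact dvd_sub hs h
    have hall : ∀ i, (3 : ℤ) ∣ l i := by
      rintro (⟨k, i⟩ | ⟨⟨k, i⟩ | i⟩)
      · exact hU k i
      · exact hE k i
      · fin_cases i
        · exact h
        · exact h1
    have := hprim 3 hall
    rw [Int.isUnit_iff] at this
    omega
  -- decompose BOG l l into blocks
  have hsplit : BOG l l =
      (∑ p : Fin 3 × Fin 2, wOG l (Sum.inl p) * l (Sum.inl p)) +
      ((∑ p : Fin 2 × Fin 8, wOG l (Sum.inr (Sum.inl p)) * l (Sum.inr (Sum.inl p))) +
        ∑ i : Fin 2, wOG l (Sum.inr (Sum.inr i)) * l (Sum.inr (Sum.inr i))) := by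
    rw [BOG_eq, Fintype.sum_sum_type, Fintype.sum_sum_type]
  have h9U : (9 : ℤ) ∣ ∑ p : Fin 3 × Fin 2, wOG l (Sum.inl p) * l (Sum.inl p) := by
    refine Finset.dvd_sum fun p _ => ?_
    exact (show (9:ℤ) = 3 * 3 by norm_num) ▸ mul_dvd_mul (h3 _) (hU p.1 p.2)
  have h9E : (9 : ℤ) ∣ ∑ p : Fin 2 × Fin 8,
      wOG l (Sum.inr (Sum.inl p)) * l (Sum.inr (Sum.inl p)) := by
    refine Finset.dvd_sum fun p _ => ?_
    exact (show (9:ℤ) = 3 * 3 by norm_num) ▸ mul_dvd_mul (h3 _) (hE p.1 p.2)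
  have h9A : (9 : ℤ) ∣ ∑ i : Fin 2, wOG l (Sum.inr (Sum.inr i)) * l (Sum.inr (Sum.inr i)) := by
    have : (∑ i : Fin 2, wOG l (Sum.inr (Sum.inr i)) * l (Sum.inr (Sum.inr i))) =
        BOG l l - ((∑ p : Fin 3 × Fin 2, wOG l (Sum.inl p) * l (Sum.inl p)) +
          ∑ p : Fin 2 × Fin 8, wOG l (Sum.inr (Sum.inl p)) * l (Sum.inr (Sum.inl p))) := by
      rw [hsplit]; ring
    rw [this, hiso]
    exact dvd_sub (dvd_zero 9) (dvd_add h9U h9E)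
  -- compute the A2 part
  have hA2val : (∑ i : Fin 2, wOG l (Sum.inr (Sum.inr i)) * l (Sum.inr (Sum.inr i))) =
      (-2 * s0 + s1) * s0 + (s0 - 2 * s1) * s1 := by
    rw [Fin.sum_univ_two, wOG_A2_0, wOG_A2_1]
  rw [hA2val] at h9A
  obtain ⟨t, ht⟩ := hs
  have h6 : (9 : ℤ) ∣ 3 * (2 * s0 ^ 2) := by
    have heq : 3 * (2 * s0 ^ 2) =
        -((-2 * s0 + s1) * s0 + (s0 - 2 * s1) * s1) + 9 * (2 * s0 * t - 2 * t ^ 2) := by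
      linear_combination (4 * s0 - 2 * s1 - 6 * t) * ht
    rw [heq]
    exact dvd_add (dvd_neg.mpr h9A) (Dvd.intro _ rfl)
  have h3' : (3 : ℤ) ∣ 2 * s0 ^ 2 := by
    have h33 : (3 : ℤ) * 3 ∣ 3 * (2 * s0 ^ 2) := by norm_num at h6 ⊢; exact h6
    exact (mul_dvd_mul_iff_left (by norm_num : (3:ℤ) ≠ 0)).mp h33
  rcases (Int.prime_three).dvd_mul.mp h3' with h | h
  · norm_num at h
  · exact hns0 ((Int.prime_three).dvd_of_dvd_pow h)

/-- In `L = U³ ⊕ E₈(-1)² ⊕ A₂(-1)`, every primitive isotropic element has divisibility `1`,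
i.e. the ideal of values `(l, L)` is all of `ℤ`. -/
theorem OG10_primitive_isotropic_div_one (l : OGIndex → ℤ) (hne : l ≠ 0)
    (hprim : ∀ n : ℤ, (∀ i, n ∣ l i) → IsUnit n)
    (hiso : BOG l l = 0) :
    ∃ m : OGIndex → ℤ, BOG l m = 1 := by
  have hno3 := no_div_three l hprim hiso
  set I : Ideal ℤ := Ideal.span (Set.range (wOG l)) with hIdef
  obtain ⟨g, hg⟩ := IsPrincipalIdealRing.principal I
  have hgI : I = Ideal.span {g} := hg
  have hgw : ∀ j, g ∣ wOG l j := by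
    intro j
    have hmem : wOG l j ∈ I := Ideal.subset_span ⟨j, rfl⟩
    rw [hgI, Ideal.mem_span_singleton] at hmem
    exact hmem
  have h3g : ¬ (3 : ℤ) ∣ g := fun h => hno3 fun j => h.trans (hgw j)
  have hcop : IsCoprime (3 : ℤ) g := (Int.prime_three).coprime_iff_not_dvd.mpr h3g
  obtain ⟨hU, hE, hA0, hA1⟩ := dvd_l_of_dvd_w l g hgw
  have hgl : ∀ i, g ∣ l i := by
    rintro (⟨k, i⟩ | ⟨⟨k, i⟩ | i⟩)
    · exact hU k i
    · exact hE k i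
    · fin_cases i
      · exact hcop.symm.dvd_of_dvd_mul_left hA0
      · exact hcop.symm.dvd_of_dvd_mul_left hA1
  have hgunit : IsUnit g := hprim g hgl
  have hItop : I = ⊤ := by
    rw [hgI]
    exact Ideal.span_singleton_eq_top.mpr hgunit
  have h1 : (1 : ℤ) ∈ Submodule.span ℤ (Set.range (wOG l)) := by
    have : (1 : ℤ) ∈ I := hItop ▸ Submodule.mem_top
    exact this
  obtain ⟨c, hc⟩ := (Submodule.mem_span_range_iff_exists_fun ℤ).mp h1
  refine ⟨c, ?_⟩
  rw [BOG_eq]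
  rw [← hc]
  exact Finset.sum_congr rfl fun j _ => by rw [smul_eq_mul, mul_comm]
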